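/- arXiv:2404.17562 — 7 statements merged into one kernel-verified Lean document; each statement's English description precedes it below -/
import Mathlib

section
/- Let f : [0,1] → [0,∞) be a decreasing function with ∫₀¹ f(t) dt = 1 (a p-to-e calibrator). If P is a p-variable (P(P ≤ t) ≤ t for all t ∈ (0,1)), then f(P) is an e-variable, i.e., E[f(P)] ≤ 1. -/
/-!
A p-variable is stochastically larger than a uniform variable `U` on `[0,1]`: for every lower
set `S` of `ℝ`, `ℙ(P ∈ S) ≤ ℙ(U ∈ S)`, because `S ∩ [0,1]` contains `[0, a)` and `P ∈ S` forces
`P ≤ a`, where `a = sup (S ∩ [0,1])`. The superlevel sets of a decreasing function are lower sets,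
so by the layer-cake formula `𝔼[f(P)] ≤ 𝔼[f(U)] = ∫₀¹ f = 1`.
-/

open MeasureTheory Set
open scoped ENNReal

section PVariable

variable {Ω : Type*} [MeasurableSpace Ω] {μ : Measure Ω} [IsProbabilityMeasure μ] {P : Ω → ℝ}

theorem measure_setOf_le_le_ofReal
    (hPsub : ∀ t : ℝ, t ∈ Ioo (0 : ℝ) 1 → (μ {ω | P ω ≤ t}).toReal ≤ t)
    {t : ℝ} (ht : 0 ≤ t) : μ {ω | P ω ≤ t} ≤ ENNReal.ofReal t := by
  rw [ENNReal.le_ofReal_iff_toReal_le (measure_ne_top μ _) ht]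
  refine le_of_forall_gt_imp_ge_of_dense fun s hts => ?_
  rcases lt_or_ge s 1 with hs1 | hs1
  · calc (μ {ω | P ω ≤ t}).toReal ≤ (μ {ω | P ω ≤ s}).toReal :=
          measureReal_mono fun ω hω => le_trans hω hts.le
      _ ≤ s := hPsub s ⟨ht.trans_lt hts, hs1⟩
  · exact measureReal_le_one.trans hs1

theorem measure_preimage_le_volume_inter_Icc
    (hPrange : ∀ ω, P ω ∈ Icc (0 : ℝ) 1)
    (hPsub : ∀ t : ℝ, t ∈ Ioo (0 : ℝ) 1 → (μ {ω | P ω ≤ t}).toReal ≤ t)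
    {S : Set ℝ} (hS : IsLowerSet S) : μ (P ⁻¹' S) ≤ volume (S ∩ Icc 0 1) := by
  set T := S ∩ Icc (0 : ℝ) 1
  have hPT : P ⁻¹' S ⊆ P ⁻¹' T := fun ω hω => ⟨hω, hPrange ω⟩
  rcases T.eq_empty_or_nonempty with hT | hT
  · simp [Set.subset_empty_iff.mp (hT ▸ hPT)]
  have hbdd : BddAbove T := bddAbove_Icc.mono inter_subset_right
  set a := sSup T
  have ha : 0 ≤ a := hT.some_mem.2.1.trans (le_csSup hbdd hT.some_mem)
  have hIco : Ico 0 a ⊆ T := fun s ⟨hs0, hsa⟩ => by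
    obtain ⟨u, huT, hsu⟩ := exists_lt_of_lt_csSup hT hsa
    exact ⟨hS hsu.le huT.1, hs0, hsu.le.trans huT.2.2⟩
  calc μ (P ⁻¹' S) ≤ μ {ω | P ω ≤ a} := measure_mono fun ω hω => le_csSup hbdd (hPT hω)
    _ ≤ ENNReal.ofReal a := measure_setOf_le_le_ofReal hPsub ha
    _ = volume (Ico 0 a) := by rw [Real.volume_Ico, sub_zero]
    _ ≤ volume T := measure_mono hIco

theorem lintegral_comp_le_setLIntegral_Icc_of_antitone (hPmeas : Measurable P)
    (hPrange : ∀ ω, P ω ∈ Icc (0 : ℝ) 1)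
    (hPsub : ∀ t : ℝ, t ∈ Ioo (0 : ℝ) 1 → (μ {ω | P ω ≤ t}).toReal ≤ t)
    {g : ℝ → ℝ} (hg : Antitone g) (hg_nonneg : 0 ≤ g) :
    ∫⁻ ω, ENNReal.ofReal (g (P ω)) ∂μ ≤ ∫⁻ t in Icc 0 1, ENNReal.ofReal (g t) := by
  calc ∫⁻ ω, ENNReal.ofReal (g (P ω)) ∂μ = ∫⁻ x in Ioi 0, μ (P ⁻¹' {t | x < g t}) :=
        lintegral_eq_lintegral_meas_lt μ (.of_forall fun ω => hg_nonneg _)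
          (hg.measurable.comp hPmeas).aemeasurable
    _ ≤ ∫⁻ x in Ioi 0, volume.restrict (Icc 0 1) {t | x < g t} := by
        refine lintegral_mono fun x => ?_
        rw [Measure.restrict_apply' measurableSet_Icc]
        exact measure_preimage_le_volume_inter_Icc hPrange hPsub
          fun _ _ hst hs => lt_of_lt_of_le hs (hg hst)
    _ = ∫⁻ t in Icc 0 1, ENNReal.ofReal (g t) :=
        (lintegral_eq_lintegral_meas_lt _ (.of_forall fun t => hg_nonneg t)
          hg.measurable.aemeasurable).symm

end PVariable

/-- **p-to-e calibrators produce e-variables.** Let `f : [0,1] → [0,∞)` be decreasing with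
`∫₀¹ f(t) dt = 1`. If `P` is a p-variable (`ℙ(P ≤ t) ≤ t` for all `t ∈ (0,1)`) taking values
in `[0,1]`, then `f(P)` is an e-variable: `𝔼[f(P)] ≤ 1`. -/
theorem calibrator_gives_evariable
    {Ω : Type*} [MeasurableSpace Ω] (μ : Measure Ω) [IsProbabilityMeasure μ]
    (f : ℝ → ℝ)
    (hf_anti : AntitoneOn f (Set.Icc (0 : ℝ) 1))
    (hf_nonneg : ∀ t ∈ Set.Icc (0 : ℝ) 1, 0 ≤ f t)
    (hf_int : ∫ t in (0 : ℝ)..1, f t = 1)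
    (P : Ω → ℝ) (hPmeas : Measurable P)
    (hPrange : ∀ ω, P ω ∈ Set.Icc (0 : ℝ) 1)
    (hPsub : ∀ t : ℝ, t ∈ Set.Ioo (0 : ℝ) 1 → (μ {ω | P ω ≤ t}).toReal ≤ t) :
    ∫⁻ ω, ENNReal.ofReal (f (P ω)) ∂μ ≤ 1 := by
  set g : ℝ → ℝ := fun t => f (projIcc 0 1 zero_le_one t)
  have hg_anti : Antitone g := fun s t hst =>
    hf_anti (projIcc 0 1 _ s).2 (projIcc 0 1 _ t).2 (monotone_projIcc _ hst)
  have hg_eq : EqOn g f (Icc 0 1) := fun t ht => by simp [g, projIcc_of_mem _ ht]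
  have hf_intOn : IntegrableOn f (Icc 0 1) := hf_anti.integrableOn_isCompact isCompact_Icc
  calc ∫⁻ ω, ENNReal.ofReal (f (P ω)) ∂μ = ∫⁻ ω, ENNReal.ofReal (g (P ω)) ∂μ := by
        simp only [hg_eq (hPrange _)]
    _ ≤ ∫⁻ t in Icc 0 1, ENNReal.ofReal (g t) :=
        lintegral_comp_le_setLIntegral_Icc_of_antitone hPmeas hPrange hPsub hg_anti
          fun t => hf_nonneg _ (projIcc 0 1 _ t).2
    _ = ∫⁻ t in Icc 0 1, ENNReal.ofReal (f t) :=
        setLIntegral_congr_fun measurableSet_Icc fun t ht => by rw [hg_eq ht]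
    _ = ENNReal.ofReal (∫ t in (0 : ℝ)..1, f t) := by
        rw [intervalIntegral.integral_of_le zero_le_one, ← integral_Icc_eq_integral_Ioc,
          ofReal_integral_eq_lintegral_ofReal hf_intOn
            ((ae_restrict_iff' measurableSet_Icc).2 (.of_forall hf_nonneg))]
    _ = 1 := by rw [hf_int, ENNReal.ofReal_one]
end

section
/- Let e₁,...,e_m be generalized e-values, i.e., nonnegative random variables with Σ_{j∈H₀} E[e_j] ≤ m where H₀ ⊆ [m] is the set of true nulls. Then the e-BH procedure at level α ∈ (0,1) controls the FDR: E[ |R ∩ H₀| / max(|R|,1) ] ≤ α, where R is the e-BH rejection set. -/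
open MeasureTheory

/-- The e-BH rejection set at level `α` applied to e-values `e : Fin m → ℝ`:
reject the `k*` largest e-values where `k* = max{k : e_{(k)} ≥ m/(αk)}`; equivalently,
`k* = max{k ≤ m : #{j : e_j ≥ m/(αk)} ≥ k}` and the rejection set is
`{j : e_j ≥ m/(α k*)}` (empty if `k* = 0`). -/
noncomputable def eBHSet (m : ℕ) (α : ℝ) (e : Fin m → ℝ) : Finset (Fin m) :=
  let k := sSup {k : ℕ |
    k ≤ m ∧ k ≤ (Finset.univ.filter (fun j : Fin m => (m : ℝ) / (α * k) ≤ e j)).card}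
  if k = 0 then ∅ else Finset.univ.filter (fun j : Fin m => (m : ℝ) / (α * k) ≤ e j)

lemma eBH_pointwise (m : ℕ) (hm : 0 < m) (α : ℝ) (hα : 0 < α)
    (v : Fin m → ℝ) (hv : ∀ j, 0 ≤ v j) (H₀ : Finset (Fin m)) :
    ((((eBHSet m α v) ∩ H₀).card : ℝ) / max ((eBHSet m α v).card) 1)
      ≤ (α / m) * ∑ j ∈ H₀, v j := by
  have hsum : 0 ≤ ∑ j ∈ H₀, v j := Finset.sum_nonneg fun j _ => hv j
  have hm' : (0:ℝ) < m := by exact_mod_cast hm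
  have hrhs : 0 ≤ (α / m) * ∑ j ∈ H₀, v j := by positivity
  simp only [eBHSet]
  set S : Set ℕ := {k : ℕ |
    k ≤ m ∧ k ≤ (Finset.univ.filter (fun j : Fin m => (m : ℝ) / (α * k) ≤ v j)).card}
    with hS
  have h0 : (0:ℕ) ∈ S := ⟨Nat.zero_le _, Nat.zero_le _⟩
  have hbdd : BddAbove S := ⟨m, fun k hk => hk.1⟩
  have hmem : sSup S ∈ S := Nat.sSup_mem ⟨0, h0⟩ hbdd
  set k := sSup S with hk
  by_cases hk0 : k = 0
  · rw [if_pos hk0]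
    simpa using hrhs
  · rw [if_neg hk0]
    set R := Finset.univ.filter (fun j : Fin m => (m : ℝ) / (α * k) ≤ v j) with hR
    have hk1 : 1 ≤ k := Nat.one_le_iff_ne_zero.mpr hk0
    have hkR : (k : ℝ) ≤ R.card := by exact_mod_cast hmem.2
    have hk' : (0:ℝ) < k := by exact_mod_cast hk1
    have ht : (0:ℝ) < (m : ℝ) / (α * k) := by positivity
    -- card bound
    have hcard : ((R ∩ H₀).card : ℝ) * ((m:ℝ) / (α * k)) ≤ ∑ j ∈ H₀, v j := by
      calc ((R ∩ H₀).card : ℝ) * ((m:ℝ) / (α * k))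
          = ∑ _j ∈ R ∩ H₀, ((m:ℝ) / (α * k)) := by
            rw [Finset.sum_const, nsmul_eq_mul]
        _ ≤ ∑ j ∈ R ∩ H₀, v j := by
            apply Finset.sum_le_sum
            intro j hj
            have := Finset.mem_inter.mp hj
            exact (Finset.mem_filter.mp this.1).2
        _ ≤ ∑ j ∈ H₀, v j := by
            apply Finset.sum_le_sum_of_subset_of_nonneg (Finset.inter_subset_right)
            intro j _ _; exact hv j
    have hcard' : ((R ∩ H₀).card : ℝ) * m ≤ α * k * ∑ j ∈ H₀, v j := by
      have h2 := mul_le_mul_of_nonneg_right hcard (le_of_lt (by positivity : (0:ℝ) < α * k))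
      have h3 : ((R ∩ H₀).card : ℝ) * ((m:ℝ) / (α * k)) * (α * k)
          = ((R ∩ H₀).card : ℝ) * m := by field_simp
      nlinarith [h2, h3]
    have hM : (0:ℝ) < ((R.card ⊔ 1 : ℕ) : ℝ) := by
      have : 1 ≤ R.card ⊔ 1 := le_max_right _ _
      exact_mod_cast lt_of_lt_of_le one_pos this
    have hkM : (k : ℝ) ≤ ((R.card ⊔ 1 : ℕ) : ℝ) := by
      have : k ≤ R.card ⊔ 1 := le_trans hmem.2 (le_max_left _ _)
      exact_mod_cast this
    rw [div_le_iff₀ hM]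
    have h4 : ((R ∩ H₀).card : ℝ) ≤ α * k * (∑ j ∈ H₀, v j) / m :=
      (le_div_iff₀ hm').mpr hcard'
    calc ((R ∩ H₀).card : ℝ) ≤ α * k * (∑ j ∈ H₀, v j) / m := h4
      _ = ((α / m) * ∑ j ∈ H₀, v j) * k := by ring
      _ ≤ ((α / m) * ∑ j ∈ H₀, v j) * ((R.card ⊔ 1 : ℕ) : ℝ) :=
          mul_le_mul_of_nonneg_left hkM hrhs

/-- **FDR control of the e-BH procedure under arbitrary dependence.** If `e₁,…,e_m` are
generalized e-values (nonnegative with `∑_{j ∈ H₀} 𝔼[e_j] ≤ m`), then the e-BH procedure at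
level `α ∈ (0,1)` controls the FDR: `𝔼[|R ∩ H₀| / (|R| ∨ 1)] ≤ α`. -/
theorem eBH_FDR_control
    {Ω : Type*} [MeasurableSpace Ω] (μ : Measure Ω) [IsProbabilityMeasure μ]
    (m : ℕ) (hm : 0 < m) (α : ℝ) (hα : α ∈ Set.Ioo (0 : ℝ) 1)
    (e : Fin m → Ω → ℝ)
    (hmeas : ∀ j, Measurable (e j))
    (hnonneg : ∀ j ω, 0 ≤ e j ω)
    (H₀ : Finset (Fin m))
    (hint : ∀ j ∈ H₀, Integrable (e j) μ)
    (hgen : ∑ j ∈ H₀, ∫ ω, e j ω ∂μ ≤ (m : ℝ)) :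
    ∫ ω, ((((eBHSet m α (fun j => e j ω)) ∩ H₀).card : ℝ) /
        max ((eBHSet m α (fun j => e j ω)).card) 1) ∂μ ≤ α := by
  obtain ⟨hα0, hα1⟩ := hα
  have hm' : (0:ℝ) < m := by exact_mod_cast hm
  by_cases hf : Integrable (fun ω =>
      ((((eBHSet m α (fun j => e j ω)) ∩ H₀).card : ℝ) /
        max ((eBHSet m α (fun j => e j ω)).card) 1)) μ
  · have hgint : Integrable (fun ω => (α / m) * ∑ j ∈ H₀, e j ω) μ :=
      (integrable_finset_sum H₀ hint).const_mul _
    calc ∫ ω, ((((eBHSet m α (fun j => e j ω)) ∩ H₀).card : ℝ) /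
            max ((eBHSet m α (fun j => e j ω)).card) 1) ∂μ
        ≤ ∫ ω, (α / m) * ∑ j ∈ H₀, e j ω ∂μ :=
          integral_mono hf hgint (fun ω =>
            eBH_pointwise m hm α hα0 (fun j => e j ω) (fun j => hnonneg j ω) H₀)
      _ = (α / m) * ∑ j ∈ H₀, ∫ ω, e j ω ∂μ := by
          rw [integral_const_mul, integral_finset_sum H₀ hint]
      _ ≤ (α / m) * m := by
          apply mul_le_mul_of_nonneg_left hgen (by positivity)
      _ = α := by field_simp
  · rw [integral_undef hf]
    exact le_of_lt hα0
end

section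
/- In the conditional-calibration setup, the key inequality φ_j(1; S_j) ≤ 0 holds for every j: applying 1{X ≥ t} ≤ X/t inside the conditional expectation shows E[(m/α)·1{ẽ_j ≥ m/(α|R̂_j(ẽ)|)}/|R̂_j(ẽ)| − ẽ_j | S_j] ≤ 0. -/
open MeasureTheory

/-- `|R̂_j(e)| = |R(e) ∪ {j}|` where `R(e)` is the e-BH rejection set at level `α`. -/
noncomputable def RhatCard (m : ℕ) (α : ℝ) (e : Fin m → ℝ) (j : Fin m) : ℕ :=
  (insert j (eBHSet m α e)).card

/-- `1{t ≤ x} ≤ x / t`, multiplied through by `t = a / (b * r)`. -/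
theorem div_mul_ite_div_le {a b r x : ℝ} (hx : 0 ≤ x) :
    a / b * (if a / (b * r) ≤ x then 1 else 0) / r ≤ x := by
  split_ifs with h
  · rwa [mul_one, div_div]
  · simpa using hx

theorem phi_at_one_nonpos_general
    {Ω : Type*} [m0 : MeasurableSpace Ω] (μ : Measure Ω)
    (m : ℕ) (α : ℝ)
    (e : Fin m → Ω → ℝ) (hnonneg : ∀ j ω, 0 ≤ e j ω)
    (𝔪 : Fin m → MeasurableSpace Ω)
    (φ : Fin m → ℝ → Ω → ℝ)
    (hφ : ∀ j c, φ j c =ᵐ[μ]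
      μ[ (fun ω =>
          (m : ℝ) / α *
            (if (m : ℝ) / (α * (RhatCard m α (fun i => e i ω) j : ℝ)) ≤ c * e j ω
              then 1 else 0) / (RhatCard m α (fun i => e i ω) j : ℝ)
          - e j ω) | 𝔪 j ]) :
    ∀ j, ∀ᵐ ω ∂μ, φ j 1 ω ≤ 0 := by
  intro j
  refine (hφ j 1).trans_le (condExp_nonpos (Filter.Eventually.of_forall fun ω => ?_))
  simpa only [one_mul, Pi.zero_apply, sub_nonpos] using div_mul_ite_div_le (hnonneg j ω)

/-- **The key inequality `φ_j(1; S_j) ≤ 0`.**  Applying `1{X ≥ t} ≤ X/t` inside the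
conditional expectation shows
`𝔼[(m/α)·1{ẽ_j ≥ m/(α|R̂_j(ẽ)|)}/|R̂_j(ẽ)| − ẽ_j ∣ S_j] ≤ 0` (almost surely),
for every `j`. -/
theorem phi_at_one_nonpos
    {Ω : Type*} [m0 : MeasurableSpace Ω] (μ : Measure Ω) [IsProbabilityMeasure μ]
    (m : ℕ) (hm : 0 < m) (α : ℝ) (hα : α ∈ Set.Ioo (0 : ℝ) 1)
    (e : Fin m → Ω → ℝ) (hmeas : ∀ j, Measurable (e j)) (hnonneg : ∀ j ω, 0 ≤ e j ω)
    (hint : ∀ j, Integrable (e j) μ)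
    (𝔪 : Fin m → MeasurableSpace Ω) (h𝔪 : ∀ j, 𝔪 j ≤ m0)
    (φ : Fin m → ℝ → Ω → ℝ)
    (hφ : ∀ j c, φ j c =ᵐ[μ]
      μ[ (fun ω =>
          (m : ℝ) / α *
            (if (m : ℝ) / (α * (RhatCard m α (fun i => e i ω) j : ℝ)) ≤ c * e j ω
              then 1 else 0) / (RhatCard m α (fun i => e i ω) j : ℝ)
          - e j ω) | 𝔪 j ]) :
    ∀ j, ∀ᵐ ω ∂μ, φ j 1 ω ≤ 0 :=
  phi_at_one_nonpos_general (m0 := m0) μ m α e hnonneg 𝔪 φ hφ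
end

section
/- Let R(e) be the e-BH rejection set of e-values e at level α, and R(e^boost) the e-BH rejection set of the boosted e-values (which satisfies R(e) ⊆ R(e^boost) and, for each j rejected by the boosted procedure, e_j^boost = m/(α|R(e)∪{j}|)). Then for any (possibly data-dependent) set S with R(e) ⊆ S ⊆ R(e^boost), the FDR of S is at most α: E[ |S ∩ H₀| / max(|S|,1) ] ≤ α. -/
open MeasureTheory

/-- Any member of the e-BH rejection set has a positive e-value. -/
lemma mem_ite_filter_pos {m k : ℕ} {α : ℝ} (hα : 0 < α) {f : Fin m → ℝ} {j : Fin m}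
    (hj : j ∈ if k = 0 then (∅ : Finset (Fin m))
      else Finset.univ.filter (fun i : Fin m => (m : ℝ) / (α * k) ≤ f i)) : 0 < f j := by
  by_cases h0 : k = 0
  · rw [if_pos h0] at hj
    exact absurd hj (Finset.notMem_empty j)
  · rw [if_neg h0, Finset.mem_filter] at hj
    have hkpos : (0 : ℝ) < k := by exact_mod_cast Nat.pos_of_ne_zero h0
    have hmpos : (0 : ℝ) < m := by exact_mod_cast j.pos
    exact lt_of_lt_of_le (div_pos hmpos (mul_pos hα hkpos)) hj.2

/-- Any member of the e-BH rejection set has a positive e-value. -/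
lemma mem_eBHSet_pos {m : ℕ} {α : ℝ} (hα : 0 < α) {f : Fin m → ℝ} {j : Fin m}
    (hj : j ∈ eBHSet m α f) : 0 < f j := by
  simp only [eBHSet] at hj
  exact mem_ite_filter_pos hα hj

/-- **FDR control of any set sandwiched between e-BH and boosted e-BH (filtering).**
Let `R(e)` be the e-BH rejection set of (generalized) e-values `e` at level `α` and
`R(e^boost)` the e-BH rejection set of the boosted e-values, which satisfy
`R(e) ⊆ R(e^boost)`, take values in `{0, m/(α|R(e)∪{j}|)}` and obey
`𝔼[e_j^boost] ≤ 𝔼[e_j]` for each null `j`.  Then any (possibly data-dependent) selection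
set `S` with `R(e) ⊆ S ⊆ R(e^boost)` controls the FDR at level `α`:
`𝔼[|S ∩ H₀| / (|S| ∨ 1)] ≤ α`. -/
theorem sandwich_FDR_control
    {Ω : Type*} [MeasurableSpace Ω] (μ : Measure Ω) [IsProbabilityMeasure μ]
    (m : ℕ) (hm : 0 < m) (α : ℝ) (hα : α ∈ Set.Ioo (0 : ℝ) 1)
    (e : Fin m → Ω → ℝ) (hmeas : ∀ j, Measurable (e j)) (hnonneg : ∀ j ω, 0 ≤ e j ω)
    (H₀ : Finset (Fin m))
    (hint : ∀ j ∈ H₀, Integrable (e j) μ)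
    (hgen : ∑ j ∈ H₀, ∫ ω, e j ω ∂μ ≤ (m : ℝ))
    (eboost : Fin m → Ω → ℝ)
    (hbmeas : ∀ j, Measurable (eboost j))
    (hbint : ∀ j ∈ H₀, Integrable (eboost j) μ)
    (hbvals : ∀ j ω, eboost j ω = (m : ℝ) / (α * (RhatCard m α (fun i => e i ω) j : ℝ))
      ∨ eboost j ω = 0)
    (hbvalid : ∀ j ∈ H₀, ∫ ω, eboost j ω ∂μ ≤ ∫ ω, e j ω ∂μ)
    (hsub : ∀ ω, eBHSet m α (fun i => e i ω) ⊆ eBHSet m α (fun i => eboost i ω))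
    (S : Ω → Finset (Fin m))
    (hSmeas : ∀ A : Finset (Fin m), MeasurableSet {ω | S ω = A})
    (hS : ∀ ω, eBHSet m α (fun i => e i ω) ⊆ S ω ∧ S ω ⊆ eBHSet m α (fun i => eboost i ω)) :
    ∫ ω, (((S ω ∩ H₀).card : ℝ) / max (S ω).card 1) ∂μ ≤ α := by
  obtain ⟨hα0, hα1⟩ := hα
  simp only [Nat.cast_max, Nat.cast_one]
  have hm0 : (0 : ℝ) < m := by exact_mod_cast hm
  -- the boosted e-values are nonnegative
  have hbnn : ∀ j ω, 0 ≤ eboost j ω := by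
    intro j ω
    rcases hbvals j ω with h | h <;> rw [h]
    exact div_nonneg (by positivity) (by positivity)
  -- pointwise key bound
  have key : ∀ ω, ∀ j ∈ H₀,
      (if j ∈ S ω then (1 : ℝ) / max ((S ω).card : ℝ) 1 else 0) ≤ α / m * eboost j ω := by
    intro ω j _
    by_cases hjS : j ∈ S ω
    · rw [if_pos hjS]
      have hjb : j ∈ eBHSet m α (fun i => eboost i ω) := (hS ω).2 hjS
      have hpos : 0 < eboost j ω := mem_eBHSet_pos hα0 hjb
      have heq : eboost j ω = (m : ℝ) / (α * (RhatCard m α (fun i => e i ω) j : ℝ)) :=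
        (hbvals j ω).resolve_right (ne_of_gt hpos)
      set c := RhatCard m α (fun i => e i ω) j with hc
      have hc1 : 1 ≤ c := Finset.card_pos.2 ⟨j, Finset.mem_insert_self _ _⟩
      have hcS : c ≤ (S ω).card := by
        apply Finset.card_le_card
        intro x hx
        rcases Finset.mem_insert.1 hx with rfl | hx
        · exact hjS
        · exact (hS ω).1 hx
      have hS1 : 1 ≤ (S ω).card := le_trans hc1 hcS
      have hmax : max ((S ω).card : ℝ) 1 = ((S ω).card : ℝ) :=
        max_eq_left (by exact_mod_cast hS1)
      rw [hmax, heq]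
      have hcR : (0 : ℝ) < c := by exact_mod_cast hc1
      have hrhs : α / m * ((m : ℝ) / (α * (c : ℝ))) = 1 / (c : ℝ) := by
        field_simp
      rw [hrhs]
      apply one_div_le_one_div_of_le hcR
      exact_mod_cast hcS
    · rw [if_neg hjS]
      exact mul_nonneg (by positivity) (hbnn j ω)
  -- rewrite the integrand as a sum
  have hf_eq : ∀ ω, ((S ω ∩ H₀).card : ℝ) / max ((S ω).card : ℝ) 1 =
      ∑ j ∈ H₀, (if j ∈ S ω then (1 : ℝ) / max ((S ω).card : ℝ) 1 else 0) := by
    intro ω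
    rw [Finset.sum_ite_mem, Finset.sum_const, nsmul_eq_mul, Finset.inter_comm, mul_one_div]
  have hgInt : Integrable (fun ω => ∑ j ∈ H₀, α / m * eboost j ω) μ :=
    integrable_finset_sum _ (fun j hj => (hbint j hj).const_mul _)
  have hmono : ∫ ω, (((S ω ∩ H₀).card : ℝ) / max ((S ω).card : ℝ) 1) ∂μ ≤
      ∫ ω, (∑ j ∈ H₀, α / m * eboost j ω) ∂μ := by
    apply integral_mono_of_nonneg
    · filter_upwards with ω
      exact div_nonneg (by positivity) (le_trans zero_le_one (le_max_right _ _))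
    · exact hgInt
    · filter_upwards with ω
      rw [hf_eq ω]
      exact Finset.sum_le_sum (key ω)
  refine le_trans hmono ?_
  rw [integral_finset_sum _ (fun j hj => (hbint j hj).const_mul _)]
  have : ∑ j ∈ H₀, ∫ ω, α / m * eboost j ω ∂μ = α / m * ∑ j ∈ H₀, ∫ ω, eboost j ω ∂μ := by
    rw [Finset.mul_sum]
    exact Finset.sum_congr rfl fun j hj => integral_const_mul _ _
  rw [this]
  have hsum : ∑ j ∈ H₀, ∫ ω, eboost j ω ∂μ ≤ (m : ℝ) :=
    le_trans (Finset.sum_le_sum hbvalid) hgen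
  calc α / m * ∑ j ∈ H₀, ∫ ω, eboost j ω ∂μ ≤ α / m * m :=
        mul_le_mul_of_nonneg_left hsum (by positivity)
    _ = α := div_mul_cancel₀ α (ne_of_gt hm0)
end

section
/- (Equivalence of BH and e-BH for conformal selection.) Let p_j = (1 + Σ_{i=1}^n 1{V_i ≥ V_{n+j}})/(n+1) be conformal p-values and define T = inf{t ∈ {V_i}_{i=1}^{n+m} : (m/(n+1))·(1 + Σ_{i=1}^n 1{V_i ≥ t})/max(Σ_{j=1}^m 1{V_{n+j} ≥ t}, 1) ≤ α} and e_j = (n+1)·1{V_{n+j} ≥ T}/(1 + Σ_{i=1}^n 1{V_i ≥ T}). Then the BH rejection set on (p₁,...,p_m) at level α, the e-BH rejection set on (e₁,...,e_m) at level α, and the threshold set {j : V_{n+j} ≥ T} all coincide. -/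
open scoped EReal

private lemma arith_iff1 (m n1 x k α : ℝ) (hm : 0 < m) (hn1 : 0 < n1) (hk : 0 < k) :
    m / n1 * (x / k) ≤ α ↔ x / n1 ≤ α * k / m := by
  rw [div_mul_div_comm, div_le_iff₀ (by positivity), div_le_div_iff₀ hn1 hm]
  constructor <;> intro h <;> nlinarith

private lemma arith_iff2 (m n1 x k α : ℝ) (hm : 0 < m) (hn1 : 0 < n1) (hk : 0 < k)
    (hx : 0 < x) (hα : 0 < α) :
    m / n1 * (x / k) ≤ α ↔ m / (α * k) ≤ n1 / x := by
  rw [div_mul_div_comm, div_le_iff₀ (by positivity), div_le_div_iff₀ (by positivity) hx]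
  constructor <;> intro h <;> nlinarith

/-- **Equivalence of BH and e-BH for conformal selection.**  With conformal p-values
`p_j = (1 + ∑_{i≤n} 1{V_i ≥ V_{n+j}})/(n+1)`, the threshold
`T = inf{t ∈ {V_i} : (m/(n+1))·(1 + ∑_{i≤n} 1{V_i ≥ t})/(∑_j 1{V_{n+j} ≥ t} ∨ 1) ≤ α}`
(computed in `EReal`, so that `inf ∅ = ⊤`), and conformal e-values
`e_j = (n+1)·1{V_{n+j} ≥ T}/(1 + ∑_{i≤n} 1{V_i ≥ T})`, the BH rejection set on the
p-values, the e-BH rejection set on the e-values (both at level `α`) and the threshold set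
`{j : V_{n+j} ≥ T}` all coincide. -/
theorem conformal_BH_eBH_threshold_equiv
    (n m : ℕ) (hn : 0 < n) (hm : 0 < m) (α : ℝ) (hα : α ∈ Set.Ioo (0 : ℝ) 1)
    (V : Fin (n + m) → ℝ)
    (p : Fin m → ℝ)
    (hp : ∀ j, p j =
      (1 + ((Finset.univ.filter
        (fun i : Fin n => V (Fin.natAdd n j) ≤ V (Fin.castAdd m i))).card : ℝ)) / (n + 1))
    (T : EReal)
    (hT : T = sInf {t : EReal | (∃ i : Fin (n + m), (V i : EReal) = t) ∧
      (m : ℝ) / (n + 1) *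
        ((1 + ((Finset.univ.filter
            (fun i : Fin n => t ≤ (V (Fin.castAdd m i) : EReal))).card : ℝ)) /
          max ((Finset.univ.filter
            (fun j : Fin m => t ≤ (V (Fin.natAdd n j) : EReal))).card : ℝ) 1) ≤ α})
    (e : Fin m → ℝ)
    (he : ∀ j, e j =
      (n + 1 : ℝ) * (if T ≤ (V (Fin.natAdd n j) : EReal) then 1 else 0) /
        (1 + ((Finset.univ.filter
          (fun i : Fin n => T ≤ (V (Fin.castAdd m i) : EReal))).card : ℝ)))
    (rstar : ℕ)
    (hrstar : rstar = sSup {r : ℕ | r ≤ m ∧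
      r ≤ (Finset.univ.filter (fun j : Fin m => p j ≤ α * r / m)).card})
    (RBH : Finset (Fin m))
    (hRBH : RBH = Finset.univ.filter (fun j : Fin m => p j ≤ α * rstar / m)) :
    RBH = eBHSet m α e ∧
    eBHSet m α e =
      Finset.univ.filter (fun j : Fin m => T ≤ (V (Fin.natAdd n j) : EReal)) := by
  obtain ⟨hα0, hα1⟩ := hα
  have hn1 : (0:ℝ) < (n:ℝ) + 1 := by positivity
  have hm0 : (0:ℝ) < (m:ℝ) := by exact_mod_cast hm
  set S : Set EReal := {t : EReal | (∃ i : Fin (n + m), (V i : EReal) = t) ∧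
      (m : ℝ) / (n + 1) *
        ((1 + ((Finset.univ.filter
            (fun i : Fin n => t ≤ (V (Fin.castAdd m i) : EReal))).card : ℝ)) /
          max ((Finset.univ.filter
            (fun j : Fin m => t ≤ (V (Fin.natAdd n j) : EReal))).card : ℝ) 1) ≤ α} with hS
  set R : Finset (Fin m) :=
    Finset.univ.filter (fun j : Fin m => T ≤ (V (Fin.natAdd n j) : EReal)) with hRdef
  have hmemR : ∀ j : Fin m, j ∈ R ↔ T ≤ (V (Fin.natAdd n j) : EReal) := by
    intro j; rw [hRdef]; simp
  -- finiteness of S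
  have hSfin : S.Finite := by
    apply (Set.finite_range (fun i : Fin (n+m) => ((V i : EReal)))).subset
    rintro t ⟨⟨i, hi⟩, -⟩
    exact ⟨i, hi⟩
  -- T ∈ S when R is nonempty
  have hTmem : R.Nonempty → T ∈ S := by
    rintro ⟨j, hj⟩
    have hjT : T ≤ (V (Fin.natAdd n j) : EReal) := (hmemR j).mp hj
    have hSne : S.Nonempty := by
      by_contra h
      rw [Set.not_nonempty_iff_eq_empty] at h
      rw [h, sInf_empty] at hT
      rw [hT] at hjT
      exact absurd (top_le_iff.mp hjT) (EReal.coe_lt_top _).ne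
    rw [hT]; exact hSne.csInf_mem hSfin
  -- the p-value of j ∈ R is at most (1 + Ncal T)/(n+1)
  have hCp : ∀ j ∈ R, p j ≤ (1 + ((Finset.univ.filter
      (fun i : Fin n => T ≤ (V (Fin.castAdd m i) : EReal))).card : ℝ)) / (n + 1) := by
    intro j hj
    rw [hp j]
    have hsub : (Finset.univ.filter
        (fun i : Fin n => V (Fin.natAdd n j) ≤ V (Fin.castAdd m i))) ⊆
        (Finset.univ.filter (fun i : Fin n => T ≤ (V (Fin.castAdd m i) : EReal))) := by
      intro i hi
      simp only [Finset.mem_filter, Finset.mem_univ, true_and] at hi ⊢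
      exact le_trans ((hmemR j).mp hj) (EReal.coe_le_coe_iff.mpr hi)
    have := Finset.card_le_card hsub
    gcongr
    
  -- key subset lemma: any "self-consistent" BH-type rejection set is inside R
  have hB : ∀ r : ℕ, 1 ≤ r →
      r ≤ (Finset.univ.filter (fun j : Fin m => p j ≤ α * r / m)).card →
      (Finset.univ.filter (fun j : Fin m => p j ≤ α * r / m)) ⊆ R := by
    intro r hr1 hrcard
    set A := Finset.univ.filter (fun j : Fin m => p j ≤ α * r / m) with hA
    have hr0 : (0:ℝ) < (r:ℝ) := by exact_mod_cast hr1
    have hAne : A.Nonempty := Finset.card_pos.mp (lt_of_lt_of_le hr1 hrcard)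
    obtain ⟨j0, hj0A, hj0min⟩ := Finset.exists_min_image A (fun j => V (Fin.natAdd n j)) hAne
    set t : EReal := (V (Fin.natAdd n j0) : EReal) with ht
    have hNcal : (Finset.univ.filter (fun i : Fin n => t ≤ (V (Fin.castAdd m i) : EReal)))
        = (Finset.univ.filter
            (fun i : Fin n => V (Fin.natAdd n j0) ≤ V (Fin.castAdd m i))) := by
      apply Finset.filter_congr
      intro i _
      rw [ht]
      exact_mod_cast Iff.rfl
    have hsub : A ⊆ Finset.univ.filter (fun j : Fin m => t ≤ (V (Fin.natAdd n j) : EReal)) := by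
      intro j hj
      simp only [Finset.mem_filter, Finset.mem_univ, true_and]
      exact EReal.coe_le_coe_iff.mpr (hj0min j hj)
    have hNtest : (r:ℝ) ≤ max ((Finset.univ.filter
        (fun j : Fin m => t ≤ (V (Fin.natAdd n j) : EReal))).card : ℝ) 1 := by
      refine le_max_of_le_left ?_
      exact_mod_cast le_trans hrcard (Finset.card_le_card hsub)
    have hpj0 : p j0 ≤ α * r / m := by
      have := Finset.mem_filter.mp (hA ▸ hj0A)
      exact this.2
    rw [hp j0] at hpj0
    have htS : t ∈ S := by
      refine ⟨⟨Fin.natAdd n j0, rfl⟩, ?_⟩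
      rw [hNcal]
      calc (m : ℝ) / (n + 1) * ((1 + ((Finset.univ.filter
            (fun i : Fin n => V (Fin.natAdd n j0) ≤ V (Fin.castAdd m i))).card : ℝ)) /
            max ((Finset.univ.filter
              (fun j : Fin m => t ≤ (V (Fin.natAdd n j) : EReal))).card : ℝ) 1)
          ≤ (m : ℝ) / (n + 1) * ((1 + ((Finset.univ.filter
            (fun i : Fin n => V (Fin.natAdd n j0) ≤ V (Fin.castAdd m i))).card : ℝ)) / r) := by
            gcongr
        _ ≤ α := (arith_iff1 (m:ℝ) ((n:ℝ)+1) _ (r:ℝ) α hm0 hn1 hr0).mpr hpj0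
    have hTt : T ≤ t := hT ▸ sInf_le htS
    intro j hj
    rw [hmemR j]
    exact le_trans hTt (EReal.coe_le_coe_iff.mpr (hj0min j hj))
  -- rstar facts
  have hbdd : BddAbove {r : ℕ | r ≤ m ∧
      r ≤ (Finset.univ.filter (fun j : Fin m => p j ≤ α * r / m)).card} :=
    ⟨m, fun x hx => hx.1⟩
  have hrmem : rstar ∈ {r : ℕ | r ≤ m ∧
      r ≤ (Finset.univ.filter (fun j : Fin m => p j ≤ α * r / m)).card} := by
    rw [hrstar]
    exact Nat.sSup_mem ⟨0, ⟨Nat.zero_le m, Nat.zero_le _⟩⟩ hbdd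
  have hrle : rstar ≤ R.card := by
    rcases Nat.eq_zero_or_pos rstar with h | h
    · omega
    · exact le_trans hrmem.2 (Finset.card_le_card (hB rstar h hrmem.2))
  -- facts when R is nonempty
  have hRcard_le_m : R.card ≤ m := by
    have := Finset.card_le_univ R
    simpa using this
  have hCcond : R.Nonempty → (m : ℝ) / (n + 1) * ((1 + ((Finset.univ.filter
      (fun i : Fin n => T ≤ (V (Fin.castAdd m i) : EReal))).card : ℝ)) / (R.card : ℝ)) ≤ α := by
    intro hRne
    have hTS := hTmem hRne
    have hcard1 : (1:ℝ) ≤ (R.card : ℝ) := by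
      exact_mod_cast Finset.card_pos.mpr hRne
    have hmax : max (((Finset.univ.filter
        (fun j : Fin m => T ≤ (V (Fin.natAdd n j) : EReal))).card : ℝ)) 1 = (R.card : ℝ) := by
      rw [← hRdef]
      exact max_eq_left hcard1
    have := hTS.2
    rwa [hmax] at this
  have hCk0 : R.Nonempty → (0:ℝ) < (R.card : ℝ) := by
    intro hRne; exact_mod_cast Finset.card_pos.mpr hRne
  have hCp2 : R.Nonempty → ∀ j ∈ R, p j ≤ α * R.card / m := by
    intro hRne j hj
    refine le_trans (hCp j hj) ?_
    exact (arith_iff1 (m:ℝ) ((n:ℝ)+1) _ (R.card:ℝ) α hm0 hn1 (hCk0 hRne)).mp (hCcond hRne)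
  have hrge : R.card ≤ rstar := by
    rcases R.eq_empty_or_nonempty with h | hRne
    · simp [h]
    · rw [hrstar]
      refine le_csSup hbdd ⟨hRcard_le_m, ?_⟩
      refine le_trans (le_of_eq rfl) (Finset.card_le_card ?_)
      intro j hj
      simp only [Finset.mem_filter, Finset.mem_univ, true_and]
      exact hCp2 hRne j hj
  have hreq : rstar = R.card := le_antisymm hrle hrge
  -- RBH = R
  have hRBHR : RBH = R := by
    rcases Nat.eq_zero_or_pos rstar with h0 | hpos
    · have hRe : R = ∅ := Finset.card_eq_zero.mp (by omega)
      rw [hRBH, hRe, h0]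
      rw [Finset.filter_eq_empty_iff]
      intro j _
      rw [hp j]
      push_neg
      have : α * ((0:ℕ):ℝ) / m = 0 := by simp
      rw [this]
      positivity
    · apply Finset.Subset.antisymm
      · rw [hRBH]; exact hB rstar hpos hrmem.2
      · have hRne : R.Nonempty := by
          rw [← Finset.card_pos, ← hreq]; exact hpos
        intro j hj
        rw [hRBH]
        simp only [Finset.mem_filter, Finset.mem_univ, true_and]
        rw [hreq]
        exact hCp2 hRne j hj
  -- e-BH side
  have hden : (0:ℝ) < 1 + ((Finset.univ.filter
      (fun i : Fin n => T ≤ (V (Fin.castAdd m i) : EReal))).card : ℝ) := by positivity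
  have heR : ∀ j ∈ R, e j = ((n:ℝ) + 1) / (1 + ((Finset.univ.filter
      (fun i : Fin n => T ≤ (V (Fin.castAdd m i) : EReal))).card : ℝ)) := by
    intro j hj
    rw [he j, if_pos ((hmemR j).mp hj), mul_one]
  have heNR : ∀ j, j ∉ R → e j = 0 := by
    intro j hj
    rw [he j, if_neg (fun h => hj ((hmemR j).mpr h)), mul_zero, zero_div]
  have hEsub : ∀ k : ℕ, 1 ≤ k →
      (Finset.univ.filter (fun j : Fin m => (m : ℝ) / (α * k) ≤ e j)) ⊆ R := by
    intro k hk j hj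
    simp only [Finset.mem_filter, Finset.mem_univ, true_and] at hj
    by_contra hjR
    rw [heNR j hjR] at hj
    have hk0 : (0:ℝ) < (k:ℝ) := by exact_mod_cast hk
    have : (0:ℝ) < (m:ℝ) / (α * k) := by positivity
    linarith
  have heRge : R.Nonempty → ∀ j ∈ R, (m:ℝ) / (α * R.card) ≤ e j := by
    intro hRne j hj
    rw [heR j hj]
    exact (arith_iff2 (m:ℝ) ((n:ℝ)+1) _ (R.card:ℝ) α hm0 hn1 (hCk0 hRne) hden hα0).mp
      (hCcond hRne)
  have hbddE : BddAbove {k : ℕ | k ≤ m ∧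
      k ≤ (Finset.univ.filter (fun j : Fin m => (m : ℝ) / (α * k) ≤ e j)).card} :=
    ⟨m, fun x hx => hx.1⟩
  set k' : ℕ := sSup {k : ℕ | k ≤ m ∧
      k ≤ (Finset.univ.filter (fun j : Fin m => (m : ℝ) / (α * k) ≤ e j)).card} with hk'
  have hk'mem : k' ∈ {k : ℕ | k ≤ m ∧
      k ≤ (Finset.univ.filter (fun j : Fin m => (m : ℝ) / (α * k) ≤ e j)).card} := by
    rw [hk']
    exact Nat.sSup_mem ⟨0, ⟨Nat.zero_le m, Nat.zero_le _⟩⟩ hbddE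
  have hk'le : k' ≤ R.card := by
    rcases Nat.eq_zero_or_pos k' with h | h
    · omega
    · exact le_trans hk'mem.2 (Finset.card_le_card (hEsub k' h))
  have hk'ge : R.card ≤ k' := by
    rcases R.eq_empty_or_nonempty with h | hRne
    · simp [h]
    · rw [hk']
      refine le_csSup hbddE ⟨hRcard_le_m, ?_⟩
      refine Finset.card_le_card ?_
      intro j hj
      simp only [Finset.mem_filter, Finset.mem_univ, true_and]
      exact heRge hRne j hj
  have hk'eq : k' = R.card := le_antisymm hk'le hk'ge
  have heBH : eBHSet m α e = R := by
    rw [eBHSet]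
    simp only [← hk']
    rcases Nat.eq_zero_or_pos k' with h0 | hpos
    · rw [if_pos h0]
      have : R = ∅ := Finset.card_eq_zero.mp (by omega)
      rw [this]
    · rw [if_neg (Nat.pos_iff_ne_zero.mp hpos)]
      apply Finset.Subset.antisymm
      · exact hEsub k' hpos
      · have hRne : R.Nonempty := by
          rw [← Finset.card_pos, ← hk'eq]; exact hpos
        intro j hj
        simp only [Finset.mem_filter, Finset.mem_univ, true_and]
        rw [hk'eq]
        exact heRge hRne j hj
  exact ⟨hRBHR.trans heBH.symm, heBH⟩
end

section
/- (Weighted exchangeability resampling.) Let Z₁,...,Z_n be i.i.d. from P and, under the null, Z_{n+j} ~ Q with dQ/dP(z) = w(x). Conditional on the unordered multiset E_j = {Z₁,...,Z_n,Z_{n+j}} with elements {z₁,...,z_{n+1}}, for any permutation σ of [n+1]: P(Z_{n+j} = z_{σ(n+1)}, Z₁ = z_{σ(1)}, ..., Z_n = z_{σ(n)} | E_j) = w(x_{σ(n+1)}) / (Σ_{i=1}^{n+1} w(x_i) · n!). Consequently, the scheme that samples Z̃_{n+j} from E_j with probabilities proportional to w, and assigns the remaining elements to Z̃₁,...,Z̃_n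 by a uniformly random permutation, reproduces the conditional joint law of (Z₁,...,Z_n,Z_{n+j}) given E_j. -/
lemma sum_perm_last' {n : ℕ} (g : Fin (n+1) → ℝ) :
    ∑ σ : Equiv.Perm (Fin (n+1)), g (σ (Fin.last n)) = n.factorial * ∑ i, g i := by
  have h1 : ∑ σ : Equiv.Perm (Fin (n+1)), g (σ (Fin.last n))
      = ∑ τ : Equiv.Perm (Fin (n+1)), g (τ 0) := by
    refine Fintype.sum_equiv (Equiv.mulRight (Equiv.swap 0 (Fin.last n))) _ _ ?_
    intro τ
    simp [Equiv.Perm.mul_apply, Equiv.swap_apply_right]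
  rw [h1, ← Equiv.sum_comp Equiv.Perm.decomposeFin.symm fun τ => g (τ 0)]
  simp [Fintype.sum_prod_type, Finset.sum_const, Fintype.card_perm, mul_comm]
  rw [← Finset.sum_mul, mul_comm]



/-- **Weighted exchangeability resampling identity.**  Under the null, the joint density of
`(Z₁,…,Z_n,Z_{n+j})` is `f(z₁,…,z_{n+1}) = w(z_{n+1})·∏ᵢ p(zᵢ)`.  Conditioning on the
unordered multiset `E_j = {z₁,…,z_{n+1}}` amounts to normalizing over all `(n+1)!`
permutations, giving for every permutation `σ`
`ℙ(Z_{n+j} = z_{σ(n+1)}, Z₁ = z_{σ(1)}, …, Z_n = z_{σ(n)} ∣ E_j)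
  = w(z_{σ(n+1)}) / (∑ᵢ w(zᵢ) · n!)`.
Consequently this equals the probability assigned by the resampling scheme that draws
`Z̃_{n+j}` from `E_j` with probabilities proportional to `w` and assigns the remaining
elements to `Z̃₁,…,Z̃_n` by a uniformly random permutation, so the scheme reproduces the
conditional joint law given `E_j`. -/
theorem weighted_exchangeability_resampling
    {𝒵 : Type*} (n : ℕ) (p w : 𝒵 → ℝ)
    (hp : ∀ z, 0 ≤ p z) (hw : ∀ z, 0 ≤ w z)
    (f : (Fin (n + 1) → 𝒵) → ℝ)
    (hf : ∀ z, f z = w (z (Fin.last n)) * ∏ i, p (z i))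
    (z : Fin (n + 1) → 𝒵)
    (hppos : 0 < ∏ i, p (z i))
    (hwpos : 0 < ∑ i, w (z i)) :
    ∀ σ : Equiv.Perm (Fin (n + 1)),
      f (z ∘ σ) / (∑ σ' : Equiv.Perm (Fin (n + 1)), f (z ∘ σ')) =
        w (z (σ (Fin.last n))) / ((∑ i, w (z i)) * (Nat.factorial n)) ∧
      f (z ∘ σ) / (∑ σ' : Equiv.Perm (Fin (n + 1)), f (z ∘ σ')) =
        (w (z (σ (Fin.last n))) / ∑ i, w (z i)) * (1 / (Nat.factorial n)) := by
  intro σ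
  have hprod : ∀ σ' : Equiv.Perm (Fin (n+1)), ∏ i, p ((z ∘ σ') i) = ∏ i, p (z i) :=
    fun σ' => Equiv.prod_comp σ' (fun i => p (z i))
  have hfc : ∀ σ' : Equiv.Perm (Fin (n+1)),
      f (z ∘ σ') = w (z (σ' (Fin.last n))) * ∏ i, p (z i) := by
    intro σ'
    rw [hf, hprod σ']
    rfl
  have hsum : ∑ σ' : Equiv.Perm (Fin (n + 1)), f (z ∘ σ')
      = (n.factorial * ∑ i, w (z i)) * ∏ i, p (z i) := by
    simp_rw [hfc]
    rw [← Finset.sum_mul, sum_perm_last' (fun i => w (z i))]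
  have hfact : (0:ℝ) < n.factorial := by positivity
  have key : f (z ∘ σ) / (∑ σ' : Equiv.Perm (Fin (n + 1)), f (z ∘ σ')) =
      w (z (σ (Fin.last n))) / ((∑ i, w (z i)) * (Nat.factorial n)) := by
    rw [hfc σ, hsum]
    field_simp
    try ring
  exact ⟨key, by rw [key]; field_simp; try ring⟩
end

section
/- (e-BH interpretation of dBH.) With dBH e-values e_j^{dBH} = m·1{p_j ≤ τ̂_j}/(α·R̂_j(p)), the dBH procedure with uniform pruning variables U₁,...,U_m is identical to the e-BH procedure at level α applied to (e₁^{dBH}/U₁, ..., e_m^{dBH}/U_m); in particular, setting all U_j = 1 shows dBH without randomized pruning equals e-BH on (e₁^{dBH},...,e_m^{dBH}). -/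
/-!
Both procedures are step-up rules of the same shape: the largest `k ≤ m` such that the
level-`k` rejection set has at least `k` elements. For `k ≥ 1` the e-BH level-`k` set of the
dBH e-values `m·1{p_j ≤ τ̂_j}/(α R̂_j U_j)` is `{j ∈ R̂⁺ : U_j ≤ k/R̂_j}`, because
`m/(αk) ≤ m/(α R̂_j U_j)` means `R̂_j U_j ≤ k`. At `k = 0` the pruning set is empty since
`U_j > 0`, which matches the empty output of e-BH when no level is admissible.
-/

open Finset

theorem eBHSet_eq_of_filter_eq {m : ℕ} {α : ℝ} {e : Fin m → ℝ} (T : ℕ → Finset (Fin m))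
    (hT₀ : T 0 = ∅)
    (hT : ∀ k : ℕ, 0 < k → univ.filter (fun j => (m : ℝ) / (α * k) ≤ e j) = T k) :
    eBHSet m α e = T (sSup {r : ℕ | r ≤ m ∧ r ≤ #(T r)}) := by
  have hcount : {k : ℕ | k ≤ m ∧ k ≤ #(univ.filter fun j => (m : ℝ) / (α * k) ≤ e j)}
      = {r : ℕ | r ≤ m ∧ r ≤ #(T r)} := by
    ext k
    rcases k.eq_zero_or_pos with rfl | hk
    · simp
    · rw [Set.mem_ofPred_eq, Set.mem_ofPred_eq, hT k hk]
  simp only [eBHSet, hcount]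
  split_ifs with h
  · rw [h, hT₀]
  · exact hT _ (Nat.pos_of_ne_zero h)

theorem div_mul_le_div_mul_mul_iff {c a k R U : ℝ} (hc : 0 < c) (ha : 0 < a) (hk : 0 < k)
    (hR : 0 < R) (hU : 0 < U) : c / (a * k) ≤ c / (a * R * U) ↔ U ≤ k / R := by
  rw [div_le_div_iff_of_pos_left hc (by positivity) (by positivity), mul_assoc,
    mul_le_mul_iff_right₀ ha, le_div_iff₀ hR, mul_comm]

theorem filter_le_dBH_eValue_eq {m : ℕ} {α : ℝ} (hα : 0 < α) {R U : Fin m → ℝ}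
    (hR : ∀ j, 0 < R j) (hU : ∀ j, 0 < U j) (P : Fin m → Prop) [DecidablePred P] {k : ℕ}
    (hk : 0 < k) :
    univ.filter (fun j => (m : ℝ) / (α * k) ≤ m * (if P j then 1 else 0) / (α * R j * U j))
      = (univ.filter P).filter fun j => U j ≤ k / R j := by
  ext j
  have hm : (0 : ℝ) < m := by exact_mod_cast j.pos
  have hk' : (0 : ℝ) < k := by exact_mod_cast hk
  by_cases hP : P j
  · simp [hP, div_mul_le_div_mul_mul_iff hm hα hk' (hR j) (hU j)]
  · simp only [mem_filter, mem_univ, hP, if_false, mul_zero, zero_div, true_and, false_and,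
      iff_false, not_le]
    positivity

theorem dBH_eBH_equiv_general
    (m : ℕ) (α : ℝ) (hα : α ∈ Set.Ioo (0 : ℝ) 1)
    (p τhat Rhat U : Fin m → ℝ)
    (hRhat : ∀ j, 1 ≤ Rhat j)
    (hU : ∀ j, 0 < U j ∧ U j ≤ 1)
    (Rplus : Finset (Fin m))
    (hRplus : Rplus = Finset.univ.filter fun j => p j ≤ τhat j)
    (rstar : ℕ)
    (hrstar : rstar = sSup {r : ℕ | r ≤ m ∧
      r ≤ (Rplus.filter fun j => U j ≤ (r : ℝ) / Rhat j).card})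
    (RdBH : Finset (Fin m))
    (hRdBH : RdBH = Rplus.filter fun j => U j ≤ (rstar : ℝ) / Rhat j)
    (etilde : Fin m → ℝ)
    (hetilde : ∀ j, etilde j =
      (m : ℝ) * (if p j ≤ τhat j then 1 else 0) / (α * Rhat j * U j)) :
    eBHSet m α etilde = RdBH ∧
    ((∀ j, U j = 1) →
      eBHSet m α (fun j => (m : ℝ) * (if p j ≤ τhat j then 1 else 0) / (α * Rhat j))
        = RdBH) := by
  have hU₀ : ∀ j, 0 < U j := fun j => (hU j).1
  have hetilde' : etilde =
      fun j => (m : ℝ) * (if p j ≤ τhat j then 1 else 0) / (α * Rhat j * U j) :=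
    funext hetilde
  have hdBH : eBHSet m α etilde = RdBH := by
    subst hRdBH hrstar hRplus hetilde'
    refine eBHSet_eq_of_filter_eq _ ?_ fun k hk => filter_le_dBH_eValue_eq hα.1
      (fun j => one_pos.trans_le (hRhat j)) hU₀ _ hk
    simpa [filter_eq_empty_iff] using fun j _ => hU₀ j
  refine ⟨hdBH, fun hU₁ => ?_⟩
  rw [← hdBH, hetilde']
  simp only [hU₁, mul_one]

/-- **e-BH interpretation of dBH.**  With dBH e-values
`e_j^{dBH} = m·1{p_j ≤ τ̂_j}/(α R̂_j)`, the dBH procedure with uniform pruning variables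
`U₁,…,U_m` (which returns `{j ∈ R̂⁺ : U_j ≤ r*/R̂_j}` where
`r* = max{r : |{j ∈ R̂⁺ : U_j ≤ r/R̂_j}| ≥ r}` and `R̂⁺ = {j : p_j ≤ τ̂_j}`) coincides with
the e-BH procedure at level `α` applied to `(e₁^{dBH}/U₁, …, e_m^{dBH}/U_m)`; in
particular, setting all `U_j = 1` shows that dBH without randomized pruning equals e-BH on
`(e₁^{dBH}, …, e_m^{dBH})`. -/
theorem dBH_eBH_equiv
    (m : ℕ) (hm : 0 < m) (α : ℝ) (hα : α ∈ Set.Ioo (0 : ℝ) 1)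
    (p τhat Rhat U : Fin m → ℝ)
    (hRhat : ∀ j, 1 ≤ Rhat j)
    (hU : ∀ j, 0 < U j ∧ U j ≤ 1)
    (Rplus : Finset (Fin m))
    (hRplus : Rplus = Finset.univ.filter fun j => p j ≤ τhat j)
    (rstar : ℕ)
    (hrstar : rstar = sSup {r : ℕ | r ≤ m ∧
      r ≤ (Rplus.filter fun j => U j ≤ (r : ℝ) / Rhat j).card})
    (RdBH : Finset (Fin m))
    (hRdBH : RdBH = Rplus.filter fun j => U j ≤ (rstar : ℝ) / Rhat j)
    (etilde : Fin m → ℝ)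
    (hetilde : ∀ j, etilde j =
      (m : ℝ) * (if p j ≤ τhat j then 1 else 0) / (α * Rhat j * U j)) :
    eBHSet m α etilde = RdBH ∧
    ((∀ j, U j = 1) →
      eBHSet m α (fun j => (m : ℝ) * (if p j ≤ τhat j then 1 else 0) / (α * Rhat j))
        = RdBH) :=
  dBH_eBH_equiv_general m α hα p τhat Rhat U hRhat hU Rplus hRplus rstar hrstar RdBH hRdBH etilde
    hetilde
end
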